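/- arXiv:2407.04341 — 4 statements merged into one kernel-verified Lean document; each statement's English description precedes it below -/
import Mathlib

section
/- Every P1-admissible curve that starts in the set B₁ remains in B₁: if q = (x,y,z) : [0,T] → ℝ³ is P1-admissible and q(0) ∈ B₁, then q(t) ∈ B₁ for all t ∈ [0,T]. In particular, every P1-admissible curve starting at the origin (0,0,0) stays in B₁ for all time. -/
open MeasureTheory Set

noncomputable section

/-- A curve `(x, y, z) : [0, T] → ℝ³` is admissible for the first flat sub-Lorentzian
problem on the Martinet distribution: it is Lipschitz on `[0, T]` and for a.e.
`t ∈ [0, T]` it is differentiable with `y' ≥ |x'|` and `z' = x² y' / 2`. -/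
def P1Admissible (T : ℝ) (x y z : ℝ → ℝ) : Prop :=
  0 ≤ T ∧
  (∃ K : NNReal, LipschitzOnWith K x (Icc 0 T) ∧ LipschitzOnWith K y (Icc 0 T) ∧
    LipschitzOnWith K z (Icc 0 T)) ∧
  ∀ᵐ t ∂(volume.restrict (Icc 0 T)),
    HasDerivAt x (deriv x t) t ∧ HasDerivAt y (deriv y t) t ∧ HasDerivAt z (deriv z t) t ∧
    |deriv x t| ≤ deriv y t ∧ deriv z t = (x t) ^ 2 * deriv y t / 2

/-- The sub-Lorentzian length of an admissible curve of the first problem. -/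
def P1Length (T : ℝ) (x y : ℝ → ℝ) : ℝ :=
  ∫ t in (0:ℝ)..T, Real.sqrt ((deriv y t) ^ 2 - (deriv x t) ^ 2)

/-- `q₁` is reachable from the origin by a P1-admissible curve. -/
def P1Reaches (q₁ : ℝ × ℝ × ℝ) : Prop :=
  ∃ (T : ℝ) (x y z : ℝ → ℝ), P1Admissible T x y z ∧
    x 0 = 0 ∧ y 0 = 0 ∧ z 0 = 0 ∧ (x T, y T, z T) = q₁

/-- The sub-Lorentzian distance from the origin in the first problem: the supremum
of lengths of P1-admissible curves from the origin to `q₁` (`0` if there are none). -/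
def P1dist (q₁ : ℝ × ℝ × ℝ) : ℝ :=
  sSup (insert 0 {l : ℝ | ∃ (T : ℝ) (x y z : ℝ → ℝ), P1Admissible T x y z ∧
    x 0 = 0 ∧ y 0 = 0 ∧ z 0 = 0 ∧ (x T, y T, z T) = q₁ ∧ l = P1Length T x y})

/-- The candidate attainable set `B₁` of the first problem. -/
def B1 : Set (ℝ × ℝ × ℝ) :=
  {p | |p.1| ≤ p.2.1 ∧ |p.1| ^ 3 / 6 ≤ p.2.2 ∧
    p.2.2 ≤ (p.2.1 ^ 3 + 3 * p.1 ^ 2 * p.2.1 + 3 * |p.1| * p.2.1 ^ 2 - 3 * |p.1| ^ 3) / 24}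

/-!
Each inequality defining `B₁` says that one of the functions `y - |x|`, `6 z - |x|³` and
`y³ + 3 x² y + 3 |x| y² - 3 |x|³ - 24 z` is nonnegative, and each of them is nondecreasing along an
admissible curve. Along the curve, `|x|` is absolutely continuous with `|(|x|)'| ≤ |x'| ≤ y'` a.e.,
and the derivative of the third function factors as `3 (y' + |x|') (y - |x|) (y + 3 |x|)`, which is
nonnegative once `y ≥ |x|` is known. Monotonicity follows from the fundamental theorem of calculus
for absolutely continuous functions.
-/

namespace AbsolutelyContinuousOnInterval

variable {f : ℝ → ℝ} {a b : ℝ}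

theorem pow (hf : AbsolutelyContinuousOnInterval f a b) :
    ∀ n : ℕ, AbsolutelyContinuousOnInterval (fun t ↦ f t ^ n) a b
  | 0 => by
    simpa using (LipschitzWith.const (1 : ℝ)).lipschitzOnWith.absolutelyContinuousOnInterval
  | n + 1 => by simpa only [pow_succ] using (hf.pow n).fun_mul hf

theorem monotoneOn_of_ae_deriv_nonneg (hf : AbsolutelyContinuousOnInterval f a b)
    (hd : ∀ᵐ t ∂volume.restrict (Icc a b), 0 ≤ deriv f t) : MonotoneOn f (Icc a b) := by
  intro s hs t ht hst
  have hft : ∫ u in s..t, deriv f u = f t - f s :=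
    (hf.mono (uIcc_subset_uIcc (Icc_subset_uIcc hs) (Icc_subset_uIcc ht))).integral_deriv_eq_sub
  have hnonneg : 0 ≤ ∫ u in s..t, deriv f u := intervalIntegral.integral_nonneg_of_ae_restrict hst
    (ae_restrict_of_ae_restrict_of_subset (Icc_subset_Icc hs.1 ht.2) hd)
  linarith

end AbsolutelyContinuousOnInterval

namespace HasDerivAt

variable {f : ℝ → ℝ} {f' g' t : ℝ}

theorem mul_eq_abs_mul_of_hasDerivAt_abs (hf : HasDerivAt f f' t)
    (hg : HasDerivAt (fun s ↦ |f s|) g' t) : f t * f' = |f t| * g' := by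
  have h₂ := hg.fun_mul hg
  simp only [abs_mul_abs_self] at h₂
  linarith [(hf.fun_mul hf).unique h₂]

theorem abs_le_of_hasDerivAt_abs (hf : HasDerivAt f f' t)
    (hg : HasDerivAt (fun s ↦ |f s|) g' t) : |g'| ≤ |f'| := by
  rcases eq_or_ne (f t) 0 with h0 | h0
  · have hmin : IsLocalMin (fun s ↦ |f s|) t :=
      Filter.Eventually.of_forall fun s ↦ by simp [h0]
    simp [hmin.hasDerivAt_eq_zero hg]
  · have := congrArg abs (hf.mul_eq_abs_mul_of_hasDerivAt_abs hg)
    rw [abs_mul, abs_mul, abs_abs] at this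
    exact (mul_left_cancel₀ (abs_ne_zero.2 h0) this).ge

end HasDerivAt

namespace P1Admissible

variable {T : ℝ} {x y z : ℝ → ℝ}

theorem absolutelyContinuousOnInterval (h : P1Admissible T x y z) :
    AbsolutelyContinuousOnInterval x 0 T ∧ AbsolutelyContinuousOnInterval y 0 T ∧
      AbsolutelyContinuousOnInterval z 0 T ∧
      AbsolutelyContinuousOnInterval (fun t ↦ |x t|) 0 T := by
  obtain ⟨hT, ⟨K, hx, hy, hz⟩, -⟩ := h
  rw [← uIcc_of_le hT] at hx hy hz
  exact ⟨hx.absolutelyContinuousOnInterval, hy.absolutelyContinuousOnInterval,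
    hz.absolutelyContinuousOnInterval,
    (lipschitzWith_one_norm.comp_lipschitzOnWith hx).absolutelyContinuousOnInterval⟩

theorem ae_hasDerivAt (h : P1Admissible T x y z) :
    ∀ᵐ t ∂volume.restrict (Icc 0 T), ∃ w,
      HasDerivAt x (deriv x t) t ∧ HasDerivAt y (deriv y t) t ∧ HasDerivAt z (deriv z t) t ∧
      HasDerivAt (fun s ↦ |x s|) w t ∧ x t * deriv x t = |x t| * w ∧ |w| ≤ deriv y t ∧
      deriv z t = x t ^ 2 * deriv y t / 2 := by
  have habs := h.absolutelyContinuousOnInterval.2.2.2.ae_differentiableAt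
  rw [uIcc_of_le h.1, ← ae_restrict_iff' measurableSet_Icc] at habs
  filter_upwards [h.2.2, habs] with t ⟨hx, hy, hz, hxy, hzy⟩ hu
  exact ⟨_, hx, hy, hz, hu.hasDerivAt, hx.mul_eq_abs_mul_of_hasDerivAt_abs hu.hasDerivAt,
    (hx.abs_le_of_hasDerivAt_abs hu.hasDerivAt).trans hxy, hzy⟩

theorem monotoneOn_sub_abs (h : P1Admissible T x y z) :
    MonotoneOn (fun t ↦ y t - |x t|) (Icc 0 T) := by
  obtain ⟨-, hy, -, hu⟩ := h.absolutelyContinuousOnInterval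
  refine (hy.fun_sub hu).monotoneOn_of_ae_deriv_nonneg ?_
  filter_upwards [h.ae_hasDerivAt] with t ⟨w, _, hy', _, hu', _, hw, _⟩
  rw [(hy'.fun_sub hu').deriv]
  linarith [le_abs_self w]

theorem monotoneOn_six_mul_sub_abs_cube (h : P1Admissible T x y z) :
    MonotoneOn (fun t ↦ 6 * z t - |x t| ^ 3) (Icc 0 T) := by
  obtain ⟨-, -, hz, hu⟩ := h.absolutelyContinuousOnInterval
  refine ((hz.const_mul 6).fun_sub (hu.pow 3)).monotoneOn_of_ae_deriv_nonneg ?_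
  filter_upwards [h.ae_hasDerivAt] with t ⟨w, _, _, hz', hu', _, hw, hzy⟩
  have hd : HasDerivAt (fun t ↦ 6 * z t - |x t| ^ 3) (3 * x t ^ 2 * (deriv y t - w)) t := by
    refine ((hz'.const_mul 6).fun_sub (hu'.fun_pow 3)).congr_deriv ?_
    rw [hzy]
    push_cast
    linear_combination -3 * w * sq_abs (x t)
  rw [hd.deriv]
  exact mul_nonneg (by positivity) (by linarith [le_abs_self w])

theorem monotoneOn_upper_boundary_sub (h : P1Admissible T x y z) (h0 : |x 0| ≤ y 0) :
    MonotoneOn (fun t ↦ y t ^ 3 + 3 * x t ^ 2 * y t + 3 * |x t| * y t ^ 2 - 3 * |x t| ^ 3 -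
      24 * z t) (Icc 0 T) := by
  obtain ⟨hx, hy, hz, hu⟩ := h.absolutelyContinuousOnInterval
  refine (((((hy.pow 3).fun_add (((hx.pow 2).const_mul 3).fun_mul hy)).fun_add
    ((hu.const_mul 3).fun_mul (hy.pow 2))).fun_sub ((hu.pow 3).const_mul 3)).fun_sub
    (hz.const_mul 24)).monotoneOn_of_ae_deriv_nonneg ?_
  filter_upwards [h.ae_hasDerivAt, ae_restrict_mem measurableSet_Icc]
    with t ⟨w, hx', hy', hz', hu', hxu, hw, hzy⟩ ht
  have hyx : |x t| ≤ y t := by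
    linarith [h.monotoneOn_sub_abs ⟨le_rfl, h.1⟩ ht ht.1]
  have hd : HasDerivAt (fun t ↦ y t ^ 3 + 3 * x t ^ 2 * y t + 3 * |x t| * y t ^ 2 -
      3 * |x t| ^ 3 - 24 * z t) (3 * (deriv y t + w) * (y t - |x t|) * (y t + 3 * |x t|)) t := by
    refine (((((hy'.fun_pow 3).fun_add (((hx'.fun_pow 2).const_mul 3).fun_mul hy')).fun_add
      ((hu'.const_mul 3).fun_mul (hy'.fun_pow 2))).fun_sub ((hu'.fun_pow 3).const_mul 3)).fun_sub
      (hz'.const_mul 24)).congr_deriv ?_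
    rw [hzy]
    push_cast
    linear_combination 6 * y t * hxu + 9 * deriv y t * sq_abs (x t)
  rw [hd.deriv]
  have := neg_abs_le w
  have := abs_nonneg (x t)
  exact mul_nonneg (mul_nonneg (by linarith) (by linarith)) (by linarith)

end P1Admissible

/-- Every P1-admissible curve starting in `B₁` remains in `B₁`. -/
theorem B1_invariant (T : ℝ) (x y z : ℝ → ℝ) (h : P1Admissible T x y z)
    (h0 : (x 0, y 0, z 0) ∈ B1) :
    ∀ t ∈ Icc (0:ℝ) T, (x t, y t, z t) ∈ B1 := by
  obtain ⟨hcone, hlower, hupper⟩ := h0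
  intro t ht
  have h0T : (0 : ℝ) ∈ Icc 0 T := ⟨le_rfl, h.1⟩
  have h₁ := h.monotoneOn_sub_abs h0T ht ht.1
  have h₂ := h.monotoneOn_six_mul_sub_abs_cube h0T ht ht.1
  have h₃ := h.monotoneOn_upper_boundary_sub hcone h0T ht ht.1
  exact ⟨by linarith, by linarith, by linarith⟩
end
end

section
/- Let q₁ = (x₁, y₁, z₁) with 0 < y₁, |x₁| ≤ y₁ and z₁ = (y₁³ + 3x₁²y₁ + 3|x₁|y₁² − 3|x₁|³)/24 (a point of the upper boundary surfaces S₁ ∪ S₂ of the attainable set). Then q₁ is reachable from the origin by a P1-admissible curve, but d(q₁) = 0: every P1-admissible curve from (0,0,0) to q₁ has sub-Lorentzian length 0. -/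
open MeasureTheory Set

noncomputable section

/-!
Along an admissible curve `y - x` and `y + x` are nondecreasing, so a curve from the origin to
`(x₁, y₁, z₁)` stays in the region `|x| ≤ m(y) := min y (c - y)`, where `c = |x₁| + y₁`. Hence
`z' = x² y' / 2 ≤ m(y)² y' / 2`, i.e. `Φ(y) - z` is nondecreasing for the primitive
`Φ = upperHeight c` of `m² / 2`. On the upper boundary `z₁ = Φ(y₁)` it vanishes at both ends, so it is constant and
`(m(y)² - x²) y' = 0` a.e. Where `y' ≠ 0` the curve touches `|x| = m(y)`, so `y - x` or `y + x`
has an extremum there and `y' = |x'|`. Thus `y'² - x'² = 0` a.e. and every such curve has length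
zero; the point itself is reached by the extremal curve `x = ±min t (c - t)`, `y = t`.
-/

open Filter Topology

theorem AbsolutelyContinuousOnInterval.monotoneOn_of_ae_deriv_nonneg_s6 {f : ℝ → ℝ} {a b : ℝ}
    (hf : AbsolutelyContinuousOnInterval f a b)
    (hf' : ∀ᵐ t ∂volume.restrict (uIcc a b), 0 ≤ deriv f t) : MonotoneOn f (uIcc a b) := by
  intro u hu v hv huv
  have hsub : uIcc u v ⊆ uIcc a b := uIcc_subset_uIcc hu hv
  have hftc := (hf.mono hsub).integral_deriv_eq_sub
  have hnonneg : 0 ≤ ∫ t in u..v, deriv f t :=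
    intervalIntegral.integral_nonneg_of_ae_restrict huv
      (ae_restrict_of_ae_restrict_of_subset (Icc_subset_uIcc.trans hsub) hf')
  linarith

/-- The height `z` reached at `y = v` by the extremal curve `|x| = min y (c - y)`. -/
def upperHeight (c v : ℝ) : ℝ :=
  ∫ u in (0:ℝ)..v, min u (c - u) ^ 2 / 2

theorem hasDerivAt_upperHeight (c v : ℝ) :
    HasDerivAt (upperHeight c) (min v (c - v) ^ 2 / 2) v :=
  ((by fun_prop : Continuous fun u : ℝ => min u (c - u) ^ 2 / 2).integral_hasStrictDerivAt
    0 v).hasDerivAt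

theorem exists_lipschitzOnWith_upperHeight (c : ℝ) {s : Set ℝ} (hs : IsCompact s) :
    ∃ K, LipschitzOnWith K (upperHeight c) s := by
  have hC1 : ContDiff ℝ 1 (upperHeight c) := by
    refine contDiff_one_iff_deriv.2 ⟨fun v => (hasDerivAt_upperHeight c v).differentiableAt, ?_⟩
    rw [funext fun v => (hasDerivAt_upperHeight c v).deriv]
    fun_prop
  exact hC1.locallyLipschitz.locallyLipschitzOn.exists_lipschitzOnWith_of_compact hs

theorem upperHeight_of_half_le {c v : ℝ} (hcv : c / 2 ≤ v) (hvc : v ≤ c) :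
    upperHeight c v = (c ^ 3 / 4 - (c - v) ^ 3) / 6 := by
  have hint : ∀ a b : ℝ, IntervalIntegrable (fun u => min u (c - u) ^ 2 / 2) volume a b :=
    fun a b => (by fun_prop : Continuous fun u : ℝ => min u (c - u) ^ 2 / 2).intervalIntegrable a b
  have hleft : ∫ u in (0:ℝ)..c / 2, min u (c - u) ^ 2 / 2 = ∫ u in (0:ℝ)..c / 2, u ^ 2 / 2 := by
    refine intervalIntegral.integral_congr fun u hu => ?_
    rw [uIcc_of_le (by linarith)] at hu
    simp only [min_eq_left (by linarith [hu.2] : u ≤ c - u)]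
  have hright : ∫ u in c / 2..v, min u (c - u) ^ 2 / 2 = ∫ u in c / 2..v, (c - u) ^ 2 / 2 := by
    refine intervalIntegral.integral_congr fun u hu => ?_
    rw [uIcc_of_le hcv] at hu
    simp only [min_eq_right (by linarith [hu.1] : c - u ≤ u)]
  rw [upperHeight, ← intervalIntegral.integral_add_adjacent_intervals (hint 0 (c / 2)) (hint _ v),
    hleft, hright, intervalIntegral.integral_comp_sub_left (fun u => u ^ 2 / 2)]
  simp only [intervalIntegral.integral_div, integral_pow]
  ring

theorem sq_deriv_eq_of_abs_eq_min {x y : ℝ → ℝ} {s : Set ℝ} {c t dx dy : ℝ} (hs : s ∈ 𝓝 t)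
    (hx : HasDerivAt x dx t) (hy : HasDerivAt y dy t)
    (hb : ∀ r ∈ s, |x r| ≤ min (y r) (c - y r)) (ht : |x t| = min (y t) (c - y t)) :
    dy ^ 2 = dx ^ 2 := by
  have hb' (r : ℝ) (hr : r ∈ s) :
      (-y r ≤ x r ∧ x r ≤ y r) ∧ (-(c - y r) ≤ x r ∧ x r ≤ c - y r) := by
    simpa only [le_min_iff, abs_le] using hb r hr
  have hsub : IsLocalExtr (fun r => y r - x r) t → dy ^ 2 = dx ^ 2 := fun h => by
    linear_combination (dy + dx) * h.hasDerivAt_eq_zero (hy.sub hx)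
  have hadd : IsLocalExtr (fun r => y r + x r) t → dy ^ 2 = dx ^ 2 := fun h => by
    linear_combination (dy - dx) * h.hasDerivAt_eq_zero (hy.add hx)
  rcases min_choice (y t) (c - y t) with hm | hm <;> rw [hm] at ht <;>
    rcases abs_choice (x t) with hxt | hxt
  · exact hsub (.inl (eventually_of_mem hs fun r hr => by dsimp only; linarith [hb' r hr]))
  · exact hadd (.inl (eventually_of_mem hs fun r hr => by dsimp only; linarith [hb' r hr]))
  · exact hadd (.inr (eventually_of_mem hs fun r hr => by dsimp only; linarith [hb' r hr]))
  · exact hsub (.inr (eventually_of_mem hs fun r hr => by dsimp only; linarith [hb' r hr]))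

theorem P1dist_eq_zero_of_forall_P1Length_eq_zero {q₁ : ℝ × ℝ × ℝ}
    (h : ∀ (T : ℝ) (x y z : ℝ → ℝ), P1Admissible T x y z → x 0 = 0 → y 0 = 0 → z 0 = 0 →
      (x T, y T, z T) = q₁ → P1Length T x y = 0) :
    P1dist q₁ = 0 := by
  rw [P1dist, eq_singleton_iff_unique_mem.2 ⟨mem_insert 0 _, ?_⟩, csSup_singleton]
  rintro l (rfl | ⟨T, x, y, z, hadm, hx0, hy0, hz0, hT, rfl⟩)
  · rfl
  · exact h T x y z hadm hx0 hy0 hz0 hT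

namespace P1Admissible

variable {T : ℝ} {x y z : ℝ → ℝ}

theorem abs_sub_le (h : P1Admissible T x y z) {r t : ℝ} (hr : r ∈ Icc 0 T) (ht : t ∈ Icc 0 T)
    (hrt : r ≤ t) : |x t - x r| ≤ y t - y r := by
  obtain ⟨hT, ⟨K, hKx, hKy, -⟩, hae⟩ := h
  rw [← uIcc_of_le hT] at hKx hKy hae hr ht
  have hmono (σ : ℝ) (hσ : |σ| = 1) : MonotoneOn (y + fun t => σ * x t) (uIcc 0 T) := by
    refine AbsolutelyContinuousOnInterval.monotoneOn_of_ae_deriv_nonneg_s6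
      (hKy.absolutelyContinuousOnInterval.add (hKx.absolutelyContinuousOnInterval.const_mul σ)) ?_
    filter_upwards [hae] with s hs
    rw [(hs.2.1.add (hs.1.const_mul σ)).deriv]
    have hσx : |σ * deriv x s| = |deriv x s| := by rw [abs_mul, hσ, one_mul]
    linarith [neg_abs_le (σ * deriv x s), hs.2.2.2.1]
  have hplus := hmono 1 abs_one hr ht hrt
  have hminus := hmono (-1) (by simp) hr ht hrt
  simp only [Pi.add_apply] at hplus hminus
  exact abs_le.2 ⟨by linarith, by linarith⟩

theorem abs_le_min (h : P1Admissible T x y z) (hx0 : x 0 = 0) (hy0 : y 0 = 0) {r : ℝ}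
    (hr : r ∈ Icc 0 T) : |x r| ≤ min (y r) (|x T| + y T - y r) := by
  have hT : T ∈ Icc 0 T := ⟨h.1, le_rfl⟩
  have hstart := h.abs_sub_le ⟨le_rfl, h.1⟩ hr hr.1
  have hend := h.abs_sub_le hr hT hr.2
  rw [hx0, hy0, sub_zero, sub_zero] at hstart
  exact le_min hstart (by linarith [abs_sub_abs_le_abs_sub (x r) (x T), abs_sub_comm (x T) (x r)])

theorem monotoneOn_upperHeight_comp_sub (h : P1Admissible T x y z) {c : ℝ}
    (hb : ∀ r ∈ Icc 0 T, |x r| ≤ min (y r) (c - y r)) :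
    MonotoneOn (fun t => upperHeight c (y t) - z t) (Icc 0 T) := by
  obtain ⟨hT, ⟨K, -, hKy, hKz⟩, hae⟩ := h
  obtain ⟨L, hL⟩ := exists_lipschitzOnWith_upperHeight c isCompact_Icc
  have hmaps : MapsTo y (Icc 0 T) (Icc 0 c) := fun r hr =>
    ⟨(abs_nonneg _).trans ((hb r hr).trans (min_le_left _ _)),
      by linarith [abs_nonneg (x r), (hb r hr).trans (min_le_right _ _)]⟩
  have hKΦy := hL.comp hKy hmaps
  rw [← uIcc_of_le hT] at hKΦy hKz hae hb ⊢
  refine AbsolutelyContinuousOnInterval.monotoneOn_of_ae_deriv_nonneg_s6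
    (hKΦy.absolutelyContinuousOnInterval.sub hKz.absolutelyContinuousOnInterval) ?_
  filter_upwards [hae, ae_restrict_mem measurableSet_uIcc] with t hderiv ht
  obtain ⟨-, hdy, hdz, hle, hz'⟩ := hderiv
  have hG : HasDerivAt (fun t => upperHeight c (y t) - z t) _ t :=
    ((hasDerivAt_upperHeight c (y t)).comp t hdy).sub hdz
  rw [hG.deriv, hz']
  have hsq : x t ^ 2 ≤ min (y t) (c - y t) ^ 2 := by
    rw [← sq_abs (x t)]
    exact pow_le_pow_left₀ (abs_nonneg _) (hb t ht) 2
  nlinarith [(abs_nonneg _).trans hle]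

theorem P1Length_eq_zero (h : P1Admissible T x y z) (hx0 : x 0 = 0) (hy0 : y 0 = 0)
    (hz0 : z 0 = 0) (hzT : z T = upperHeight (|x T| + y T) (y T)) : P1Length T x y = 0 := by
  set c := |x T| + y T
  have hb : ∀ r ∈ Icc 0 T, |x r| ≤ min (y r) (c - y r) := fun r hr => h.abs_le_min hx0 hy0 hr
  set G := fun t => upperHeight c (y t) - z t
  have hG : ∀ t ∈ Icc 0 T, G t = 0 := fun t ht => by
    have hmono := h.monotoneOn_upperHeight_comp_sub hb
    have h0 := hmono ⟨le_rfl, h.1⟩ ht ht.1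
    have hT := hmono ht ⟨h.1, le_rfl⟩ ht.2
    simp only [hy0, hz0, hzT, upperHeight, intervalIntegral.integral_same, sub_self] at h0 hT
    exact le_antisymm hT h0
  have hsq : ∀ᵐ t ∂volume.restrict (Ioo 0 T), deriv y t ^ 2 = deriv x t ^ 2 := by
    filter_upwards [ae_restrict_mem measurableSet_Ioo,
      ae_restrict_of_ae_restrict_of_subset Ioo_subset_Icc_self h.2.2] with t ht hderiv
    obtain ⟨hdx, hdy, hdz, hle, hz'⟩ := hderiv
    have hnhds : Icc 0 T ∈ 𝓝 t := Icc_mem_nhds ht.1 ht.2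
    have hGt := ((hasDerivAt_upperHeight c (y t)).comp t hdy).sub hdz
    have hG0 : HasDerivAt G 0 t :=
      (hasDerivAt_const t 0).congr_of_eventuallyEq (eventually_of_mem hnhds hG)
    have hprod : (min (y t) (c - y t) ^ 2 - x t ^ 2) * deriv y t = 0 := by
      linarith [hGt.unique hG0]
    rcases mul_eq_zero.1 hprod with hm | hy'
    · refine sq_deriv_eq_of_abs_eq_min hnhds hdx hdy hb ?_
      rw [← abs_of_nonneg ((abs_nonneg _).trans (hb t (Ioo_subset_Icc_self ht)))]
      exact (sq_eq_sq_iff_abs_eq_abs _ _).1 (by linarith)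
    · have hx' : deriv x t = 0 := abs_nonpos_iff.1 (by linarith)
      rw [hy', hx']
  rw [P1Length, intervalIntegral.integral_of_le h.1, integral_Ioc_eq_integral_Ioo]
  exact integral_eq_zero_of_ae <| hsq.mono fun t ht => by
    simp only [ht, sub_self, Real.sqrt_zero, Pi.zero_apply]

end P1Admissible

theorem P1Reaches_upperHeight {x₁ y₁ : ℝ} (hx : |x₁| ≤ y₁) :
    P1Reaches (x₁, y₁, upperHeight (|x₁| + y₁) y₁) := by
  set c := |x₁| + y₁
  have hc : 0 ≤ c := by linarith [abs_nonneg x₁]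
  obtain ⟨σ, hσ, hσx⟩ : ∃ σ : ℝ, |σ| = 1 ∧ σ * |x₁| = x₁ := by
    rcases abs_choice x₁ with h | h
    · exact ⟨1, abs_one, by rw [h, one_mul]⟩
    · exact ⟨-1, by simp, by rw [h]; ring⟩
  have hm : LipschitzWith 1 (fun t => min t (c - t)) := by
    simpa using LipschitzWith.id.min ((LipschitzWith.const c).sub LipschitzWith.id)
  have hX : LipschitzWith 1 (fun t => σ * min t (c - t)) :=
    LipschitzWith.of_dist_le_mul fun a b => by
      simpa [Real.dist_eq, ← mul_sub, abs_mul, hσ] using hm.dist_le_mul a b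
  obtain ⟨L, hL⟩ := exists_lipschitzOnWith_upperHeight c (isCompact_Icc (a := 0) (b := y₁))
  refine ⟨y₁, fun t => σ * min t (c - t), id, upperHeight c,
    ⟨(abs_nonneg _).trans hx, ⟨max 1 L, hX.lipschitzOnWith.weaken (le_max_left _ _),
      LipschitzWith.id.lipschitzOnWith.weaken (le_max_left _ _), hL.weaken (le_max_right _ _)⟩, ?_⟩,
    by simp [hc], rfl, by simp [upperHeight], ?_⟩
  · filter_upwards [ae_restrict_of_ae hX.ae_differentiableAt_real] with t ht
    refine ⟨ht.hasDerivAt, (hasDerivAt_id t).deriv ▸ hasDerivAt_id t,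
      (hasDerivAt_upperHeight c t).deriv ▸ hasDerivAt_upperHeight c t, ?_, ?_⟩
    · simpa using norm_deriv_le_of_lipschitz hX
    · rw [(hasDerivAt_upperHeight c t).deriv, deriv_id, mul_pow, ← sq_abs σ, hσ]
      ring
  · simp [c, min_eq_right hx, hσx]

theorem P1dist_upper_boundary_general (x₁ y₁ z₁ : ℝ) (hx : |x₁| ≤ y₁)
    (hz : z₁ = (y₁ ^ 3 + 3 * x₁ ^ 2 * y₁ + 3 * |x₁| * y₁ ^ 2 - 3 * |x₁| ^ 3) / 24) :
    P1Reaches (x₁, y₁, z₁) ∧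
      (∀ (T : ℝ) (x y z : ℝ → ℝ), P1Admissible T x y z →
        x 0 = 0 → y 0 = 0 → z 0 = 0 → (x T, y T, z T) = (x₁, y₁, z₁) →
        P1Length T x y = 0) ∧
      P1dist (x₁, y₁, z₁) = 0 := by
  have hz₁ : z₁ = upperHeight (|x₁| + y₁) y₁ := by
    rw [upperHeight_of_half_le (by linarith [abs_nonneg x₁]) (by linarith [abs_nonneg x₁]), hz,
      add_sub_cancel_right]
    linear_combination (-(y₁ / 8)) * sq_abs x₁
  subst hz₁
  have hlength : ∀ (T : ℝ) (x y z : ℝ → ℝ), P1Admissible T x y z →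
      x 0 = 0 → y 0 = 0 → z 0 = 0 → (x T, y T, z T) = (x₁, y₁, upperHeight (|x₁| + y₁) y₁) →
      P1Length T x y = 0 := by
    rintro T x y z h hx0 hy0 hz0 hT
    simp only [Prod.mk.injEq] at hT
    obtain ⟨rfl, rfl, hzT⟩ := hT
    exact h.P1Length_eq_zero hx0 hy0 hz0 hzT
  exact ⟨P1Reaches_upperHeight hx, hlength, P1dist_eq_zero_of_forall_P1Length_eq_zero hlength⟩

/-- A point `q₁` of the upper boundary surfaces `S₁ ∪ S₂` of the attainable set is
reachable from the origin, but `d(q₁) = 0`: every P1-admissible curve from the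
origin to `q₁` has sub-Lorentzian length `0`. -/
theorem P1dist_upper_boundary (x₁ y₁ z₁ : ℝ) (hy : 0 < y₁) (hx : |x₁| ≤ y₁)
    (hz : z₁ = (y₁ ^ 3 + 3 * x₁ ^ 2 * y₁ + 3 * |x₁| * y₁ ^ 2 - 3 * |x₁| ^ 3) / 24) :
    P1Reaches (x₁, y₁, z₁) ∧
      (∀ (T : ℝ) (x y z : ℝ → ℝ), P1Admissible T x y z →
        x 0 = 0 → y 0 = 0 → z 0 = 0 → (x T, y T, z T) = (x₁, y₁, z₁) →
        P1Length T x y = 0) ∧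
      P1dist (x₁, y₁, z₁) = 0 :=
  P1dist_upper_boundary_general x₁ y₁ z₁ hx hz
end
end

section
/- For every τ ∈ (0, π], the quantity J₀(τ) = cos(3τ) + (8τ² − 1)·cos τ − 4τ·sin τ is strictly negative. (This follows from the identity d/dτ (J₀(τ)/sin τ) = −2(2τ − sin 2τ)²/sin² τ < 0 on (0, π) and J₀(τ)/sin τ → 0 as τ → 0⁺.) -/
/-!
Off the zeros of `sin`, `J₀ τ / sin τ` has derivative `-2 (2τ - sin 2τ)² / sin² τ`, which is negative
on `(0, π)` because `sin x < x` for `x > 0`. Since `J₀ 0 = J₀' 0 = 0`, the quotient tends to `0` at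
`0⁺`, so it is negative on `(0, π)`, and so is `J₀`. At `τ = π` one computes `J₀ π = -8π²` directly.
-/

open Real Set Filter Topology

theorem tendsto_div_nhdsNE_of_hasDerivAt {𝕜 : Type*} [NontriviallyNormedField 𝕜] {f g : 𝕜 → 𝕜}
    {f' g' a : 𝕜} (hf : HasDerivAt f f' a) (hg : HasDerivAt g g' a) (hfa : f a = 0)
    (hga : g a = 0) (hg' : g' ≠ 0) :
    Tendsto (fun x => f x / g x) (𝓝[≠] a) (𝓝 (f' / g')) := by
  refine ((hasDerivAt_iff_tendsto_slope.mp hf).div (hasDerivAt_iff_tendsto_slope.mp hg) hg').congr'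
    (eventually_nhdsWithin_of_forall fun x hx => ?_)
  have hxa : x - a ≠ 0 := sub_ne_zero.mpr hx
  rw [Pi.div_apply, slope_def_field, slope_def_field, hfa, hga, sub_zero, sub_zero]
  field_simp

theorem StrictAntiOn.lt_of_tendsto_nhdsGT {f : ℝ → ℝ} {a b L : ℝ} (hf : StrictAntiOn f (Ioo a b))
    (hlim : Tendsto f (𝓝[>] a) (𝓝 L)) {t : ℝ} (ht : t ∈ Ioo a b) : f t < L := by
  obtain ⟨hat, htb⟩ := ht
  have hmid : (a + t) / 2 ∈ Ioo a b := ⟨by linarith, by linarith⟩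
  have hle : f ((a + t) / 2) ≤ L := by
    refine ge_of_tendsto hlim ?_
    filter_upwards [Ioo_mem_nhdsGT (show a < (a + t) / 2 by linarith)] with x hx
    exact hf.antitoneOn ⟨hx.1, hx.2.trans hmid.2⟩ hmid hx.2.le
  exact (hf hmid ⟨hat, htb⟩ (by linarith)).trans_le hle

noncomputable def J₀ (τ : ℝ) : ℝ :=
  cos (3 * τ) + (8 * τ ^ 2 - 1) * cos τ - 4 * τ * sin τ

theorem hasDerivAt_J₀ (τ : ℝ) :
    HasDerivAt J₀ (-3 * sin (3 * τ) + 12 * τ * cos τ - (8 * τ ^ 2 + 3) * sin τ) τ := by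
  have h3 : HasDerivAt (fun τ : ℝ => 3 * τ) 3 τ := by
    simpa using (hasDerivAt_id τ).const_mul 3
  have hpoly : HasDerivAt (fun τ : ℝ => 8 * τ ^ 2 - 1) (8 * (2 * τ)) τ := by
    simpa using ((hasDerivAt_pow 2 τ).const_mul 8).sub_const 1
  have h4 : HasDerivAt (fun τ : ℝ => 4 * τ) 4 τ := by
    simpa using (hasDerivAt_id τ).const_mul 4
  refine ((((hasDerivAt_cos (3 * τ)).comp τ h3).add (hpoly.mul (hasDerivAt_cos τ))).sub
    (h4.mul (hasDerivAt_sin τ))).congr_deriv ?_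
  ring

theorem hasDerivAt_J₀_div_sin {τ : ℝ} (hs : sin τ ≠ 0) :
    HasDerivAt (fun τ => J₀ τ / sin τ) (-2 * (2 * τ - sin (2 * τ)) ^ 2 / sin τ ^ 2) τ := by
  refine ((hasDerivAt_J₀ τ).div (hasDerivAt_sin τ) hs).congr_deriv ?_
  rw [div_eq_div_iff (by positivity) (by positivity), J₀, cos_three_mul, sin_three_mul, sin_two_mul]
  linear_combination (12 * sin τ ^ 2 - 4 * cos τ ^ 2 - 8 * τ ^ 2) * sin τ ^ 2 *
    sin_sq_add_cos_sq τ

theorem strictAntiOn_J₀_div_sin : StrictAntiOn (fun τ => J₀ τ / sin τ) (Ioo 0 π) := by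
  have hs {x : ℝ} (hx : x ∈ Ioo 0 π) : sin x ≠ 0 := (sin_pos_of_pos_of_lt_pi hx.1 hx.2).ne'
  refine strictAntiOn_of_deriv_neg (convex_Ioo 0 π)
    (fun x hx => (hasDerivAt_J₀_div_sin (hs hx)).continuousAt.continuousWithinAt) fun x hx => ?_
  rw [interior_Ioo] at hx
  rw [(hasDerivAt_J₀_div_sin (hs hx)).deriv]
  have hgap : 0 < (2 * x - sin (2 * x)) ^ 2 := pow_pos (sub_pos.mpr (sin_lt (by linarith [hx.1]))) 2
  exact div_neg_of_neg_of_pos (by linarith) (pow_pos (sin_pos_of_pos_of_lt_pi hx.1 hx.2) 2)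

theorem tendsto_J₀_div_sin_nhdsGT_zero : Tendsto (fun τ => J₀ τ / sin τ) (𝓝[>] 0) (𝓝 0) := by
  have h := tendsto_div_nhdsNE_of_hasDerivAt (hasDerivAt_J₀ 0) (hasDerivAt_sin 0)
    (by norm_num [J₀]) sin_zero (by simp)
  norm_num at h
  exact h.mono_left (nhdsGT_le_nhdsNE 0)

/-- The leading term `J₀(τ) = cos 3τ + (8τ² − 1) cos τ − 4τ sin τ` of the Jacobian
of the sub-Lorentzian exponential mapping of the first flat Martinet problem is
strictly negative on `(0, π]`. -/
theorem J0_neg (τ : ℝ) (h0 : 0 < τ) (hπ : τ ≤ Real.pi) :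
    Real.cos (3 * τ) + (8 * τ ^ 2 - 1) * Real.cos τ - 4 * τ * Real.sin τ < 0 := by
  change J₀ τ < 0
  rcases hπ.lt_or_eq with hlt | rfl
  · have hquot : J₀ τ / sin τ < 0 :=
      strictAntiOn_J₀_div_sin.lt_of_tendsto_nhdsGT tendsto_J₀_div_sin_nhdsGT_zero ⟨h0, hlt⟩
    exact neg_of_div_neg_left hquot (sin_pos_of_pos_of_lt_pi h0 hlt).le
  · have hcos : cos (3 * π) = -1 := by
      rw [show 3 * π = π + 2 * π by ring, cos_add_two_pi, cos_pi]
    rw [J₀, hcos, cos_pi, sin_pi]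
    nlinarith [pi_pos]
end

section
/- Let c > 0 and let φ, x, y, z : [0,T] → ℝ be continuously differentiable functions satisfying the normal Hamiltonian system φ'(t) = −c·x(t), x'(t) = sinh φ(t), y'(t) = cosh φ(t), z'(t) = x(t)²·cosh φ(t)/2 on [0,T], with initial conditions φ(0) > 0 and x(0) = y(0) = z(0) = 0. Suppose moreover that x(s) > 0 for all s ∈ (0,T). Then for every t ∈ (0,T]: x(t)²·y(t) < 6·z(t) and 24·z(t) < y(t)³ + 3x(t)²y(t) + 3x(t)y(t)² − 3x(t)³. -/
/-!
Each of the two gaps, `6z − x²y` and `y³ + 3x²y + 3xy² − 3x³ − 24z`, vanishes at `t = 0`, so it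
suffices that its derivative is positive on `(0, T)`. These derivatives are
`2x (x cosh φ − y sinh φ)` and `3 e^φ (y − x)(y + 3x)`. Since `(y ∓ x)' = e^{∓φ} > 0` we get
`|x| < y`, hence `y cosh φ − x sinh φ > 0`; and `(x cosh φ − y sinh φ)' = c x (y cosh φ − x sinh φ)`,
so `x cosh φ − y sinh φ > 0` as well once `x > 0`.
-/

open Set Real

lemma pos_of_hasDerivAt_pos_of_eq_zero {f f' : ℝ → ℝ} {a b : ℝ}
    (hf : ∀ t ∈ Icc a b, HasDerivAt f (f' t) t) (ha : f a = 0)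
    (hf' : ∀ t ∈ Ioo a b, 0 < f' t) : ∀ t ∈ Ioc a b, 0 < f t := by
  intro t ht
  have hmono : StrictMonoOn f (Icc a b) := by
    refine strictMonoOn_of_deriv_pos (convex_Icc a b)
      (fun s hs => (hf s hs).continuousAt.continuousWithinAt) fun s hs => ?_
    rw [interior_Icc] at hs
    rw [(hf s (Ioo_subset_Icc_self hs)).deriv]
    exact hf' s hs
  simpa [ha] using
    hmono (left_mem_Icc.2 (ht.1.le.trans ht.2)) (Ioc_subset_Icc_self ht) ht.1

lemma mul_cosh_sub_mul_sinh_pos {a u v : ℝ} (h : |v| < u) : 0 < u * cosh a - v * sinh a := by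
  obtain ⟨h₁, h₂⟩ := abs_lt.1 h
  have hexp : u * cosh a - v * sinh a = ((u - v) * exp a + (u + v) * exp (-a)) / 2 := by
    rw [cosh_eq, sinh_eq]
    ring
  rw [hexp]
  exact half_pos (add_pos (mul_pos (by linarith) (exp_pos a)) (mul_pos (by linarith) (exp_pos _)))

namespace Martinet

variable {c T : ℝ} {φ x y z : ℝ → ℝ}

lemma abs_x_lt_y
    (hx : ∀ t ∈ Icc (0:ℝ) T, HasDerivAt x (sinh (φ t)) t)
    (hy : ∀ t ∈ Icc (0:ℝ) T, HasDerivAt y (cosh (φ t)) t)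
    (hx0 : x 0 = 0) (hy0 : y 0 = 0) :
    ∀ t ∈ Ioc (0:ℝ) T, |x t| < y t := by
  intro t ht
  have hsub : 0 < y t - x t :=
    pos_of_hasDerivAt_pos_of_eq_zero (f' := fun s => cosh (φ s) - sinh (φ s))
      (fun s hs => (hy s hs).sub (hx s hs)) (by simp [hx0, hy0])
      (fun s _ => by simpa only [cosh_sub_sinh] using exp_pos _) t ht
  have hadd : 0 < x t + y t :=
    pos_of_hasDerivAt_pos_of_eq_zero (f' := fun s => sinh (φ s) + cosh (φ s))
      (fun s hs => (hx s hs).add (hy s hs)) (by simp [hx0, hy0])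
      (fun s _ => by simpa only [sinh_add_cosh] using exp_pos _) t ht
  exact abs_lt.2 ⟨by linarith, by linarith⟩

lemma x_mul_cosh_sub_y_mul_sinh_pos (hc : 0 < c)
    (hφ : ∀ t ∈ Icc (0:ℝ) T, HasDerivAt φ (-(c * x t)) t)
    (hx : ∀ t ∈ Icc (0:ℝ) T, HasDerivAt x (sinh (φ t)) t)
    (hy : ∀ t ∈ Icc (0:ℝ) T, HasDerivAt y (cosh (φ t)) t)
    (hx0 : x 0 = 0) (hy0 : y 0 = 0)
    (hxpos : ∀ s ∈ Ioo (0:ℝ) T, 0 < x s) (habs : ∀ t ∈ Ioc (0:ℝ) T, |x t| < y t) :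
    ∀ t ∈ Ioc (0:ℝ) T, 0 < x t * cosh (φ t) - y t * sinh (φ t) := by
  refine pos_of_hasDerivAt_pos_of_eq_zero
    (f' := fun s => c * x s * (y s * cosh (φ s) - x s * sinh (φ s)))
    (fun s hs => ?_) (by simp [hx0, hy0]) fun s hs => ?_
  · refine (((hx s hs).mul (hφ s hs).cosh).sub ((hy s hs).mul (hφ s hs).sinh)).congr_deriv ?_
    ring
  · exact mul_pos (mul_pos hc (hxpos s hs))
      (mul_cosh_sub_mul_sinh_pos (habs s (Ioo_subset_Ioc_self hs)))

lemma lower_boundary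
    (hx : ∀ t ∈ Icc (0:ℝ) T, HasDerivAt x (sinh (φ t)) t)
    (hy : ∀ t ∈ Icc (0:ℝ) T, HasDerivAt y (cosh (φ t)) t)
    (hz : ∀ t ∈ Icc (0:ℝ) T, HasDerivAt z (x t ^ 2 * cosh (φ t) / 2) t)
    (hx0 : x 0 = 0) (hz0 : z 0 = 0) (hxpos : ∀ s ∈ Ioo (0:ℝ) T, 0 < x s)
    (hG : ∀ t ∈ Ioc (0:ℝ) T, 0 < x t * cosh (φ t) - y t * sinh (φ t)) :
    ∀ t ∈ Ioc (0:ℝ) T, x t ^ 2 * y t < 6 * z t := by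
  intro t ht
  have hgap : 0 < 6 * z t - x t ^ 2 * y t := by
    refine pos_of_hasDerivAt_pos_of_eq_zero (f := fun s => 6 * z s - x s ^ 2 * y s)
      (f' := fun s => 2 * x s * (x s * cosh (φ s) - y s * sinh (φ s)))
      (fun s hs => ?_) (by simp [hx0, hz0]) (fun s hs => ?_) t ht
    · refine (((hz s hs).const_mul 6).sub (((hx s hs).pow 2).mul (hy s hs))).congr_deriv ?_
      push_cast [Pi.pow_apply]
      ring
    · exact mul_pos (by linarith [hxpos s hs]) (hG s (Ioo_subset_Ioc_self hs))
  linarith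

lemma upper_boundary
    (hx : ∀ t ∈ Icc (0:ℝ) T, HasDerivAt x (sinh (φ t)) t)
    (hy : ∀ t ∈ Icc (0:ℝ) T, HasDerivAt y (cosh (φ t)) t)
    (hz : ∀ t ∈ Icc (0:ℝ) T, HasDerivAt z (x t ^ 2 * cosh (φ t) / 2) t)
    (hx0 : x 0 = 0) (hy0 : y 0 = 0) (hz0 : z 0 = 0) (hxpos : ∀ s ∈ Ioo (0:ℝ) T, 0 < x s)
    (habs : ∀ t ∈ Ioc (0:ℝ) T, |x t| < y t) :
    ∀ t ∈ Ioc (0:ℝ) T,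
      24 * z t < y t ^ 3 + 3 * x t ^ 2 * y t + 3 * x t * y t ^ 2 - 3 * x t ^ 3 := by
  intro t ht
  have hgap : 0 < y t ^ 3 + 3 * x t ^ 2 * y t + 3 * x t * y t ^ 2 - 3 * x t ^ 3 - 24 * z t := by
    refine pos_of_hasDerivAt_pos_of_eq_zero
      (f := fun s => y s ^ 3 + 3 * x s ^ 2 * y s + 3 * x s * y s ^ 2 - 3 * x s ^ 3 - 24 * z s)
      (f' := fun s => 3 * exp (φ s) * ((y s - x s) * (y s + 3 * x s)))
      (fun s hs => ?_) (by simp [hx0, hy0, hz0]) (fun s hs => ?_) t ht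
    · have hpoly := (((((hy s hs).pow 3).add ((((hx s hs).pow 2).const_mul 3).mul (hy s hs))).add
          (((hx s hs).const_mul 3).mul ((hy s hs).pow 2))).sub
          (((hx s hs).pow 3).const_mul 3)).sub ((hz s hs).const_mul 24)
      refine hpoly.congr_deriv ?_
      rw [← sinh_add_cosh]
      push_cast [Pi.pow_apply]
      ring
    · obtain ⟨h₁, h₂⟩ := abs_lt.1 (habs s (Ioo_subset_Ioc_self hs))
      have := hxpos s hs
      exact mul_pos (mul_pos three_pos (exp_pos _)) (mul_pos (by linarith) (by linarith))
  linarith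

end Martinet

theorem normal_extremal_between_boundaries_general
    (c T : ℝ) (hc : 0 < c) (φ x y z : ℝ → ℝ)
    (hφ : ∀ t ∈ Icc (0:ℝ) T, HasDerivAt φ (-(c * x t)) t)
    (hx : ∀ t ∈ Icc (0:ℝ) T, HasDerivAt x (Real.sinh (φ t)) t)
    (hy : ∀ t ∈ Icc (0:ℝ) T, HasDerivAt y (Real.cosh (φ t)) t)
    (hz : ∀ t ∈ Icc (0:ℝ) T, HasDerivAt z (x t ^ 2 * Real.cosh (φ t) / 2) t)
    (hx0 : x 0 = 0) (hy0 : y 0 = 0) (hz0 : z 0 = 0)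
    (hxpos : ∀ s ∈ Ioo (0:ℝ) T, 0 < x s) :
    ∀ t ∈ Ioc (0:ℝ) T,
      x t ^ 2 * y t < 6 * z t ∧
      24 * z t < y t ^ 3 + 3 * x t ^ 2 * y t + 3 * x t * y t ^ 2 - 3 * x t ^ 3 := by
  have habs := Martinet.abs_x_lt_y hx hy hx0 hy0
  have hG := Martinet.x_mul_cosh_sub_y_mul_sinh_pos hc hφ hx hy hx0 hy0 hxpos habs
  exact fun t ht => ⟨Martinet.lower_boundary hx hy hz hx0 hz0 hxpos hG t ht,
    Martinet.upper_boundary hx hy hz hx0 hy0 hz0 hxpos habs t ht⟩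

/-- A normal extremal of the first flat Martinet sub-Lorentzian problem with `c > 0`,
`φ(0) > 0`, starting at the origin and staying in `{x > 0}`, stays strictly between
the lower boundary surface `z = x³/6` and the upper boundary surface
`z = (−3x³ + 3x²y + 3xy² + y³)/24` of the attainable set. -/
theorem normal_extremal_between_boundaries
    (c T : ℝ) (hc : 0 < c) (φ x y z : ℝ → ℝ)
    (hφ : ∀ t ∈ Icc (0:ℝ) T, HasDerivAt φ (-(c * x t)) t)
    (hx : ∀ t ∈ Icc (0:ℝ) T, HasDerivAt x (Real.sinh (φ t)) t)
    (hy : ∀ t ∈ Icc (0:ℝ) T, HasDerivAt y (Real.cosh (φ t)) t)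
    (hz : ∀ t ∈ Icc (0:ℝ) T, HasDerivAt z (x t ^ 2 * Real.cosh (φ t) / 2) t)
    (hφ0 : 0 < φ 0) (hx0 : x 0 = 0) (hy0 : y 0 = 0) (hz0 : z 0 = 0)
    (hxpos : ∀ s ∈ Ioo (0:ℝ) T, 0 < x s) :
    ∀ t ∈ Ioc (0:ℝ) T,
      x t ^ 2 * y t < 6 * z t ∧
      24 * z t < y t ^ 3 + 3 * x t ^ 2 * y t + 3 * x t * y t ^ 2 - 3 * x t ^ 3 :=
  normal_extremal_between_boundaries_general c T hc φ x y z hφ hx hy hz hx0 hy0 hz0 hxpos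
end
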